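/- For every k ≥ 1, no conjugate of γ^k is in class P, where γ: a ↦ aca, b ↦ cab, c ↦ b. -/
import Mathlib

inductive ABC : Type
  | a | b | c
  deriving DecidableEq, Inhabited, Repr

/-- The morphism γ : a ↦ aca, b ↦ cab, c ↦ b. -/
def gam : ABC → List ABC
  | .a => [.a, .c, .a]
  | .b => [.c, .a, .b]
  | .c => [.b]

/-- The palindromes p₀ = b, p₁ = bacacab, p_{k+1} = p_k aca p_{k-1} aca p_k. -/
def pseq : ℕ → List ABC
  | 0 => [.b]
  | 1 => [.b, .a, .c, .a, .c, .a, .b]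
  | (k+2) => pseq (k+1) ++ [.a, .c, .a] ++ pseq k ++ [.a, .c, .a] ++ pseq (k+1)

/-- The k-th iterate of a morphism given by its letter images. -/
def iterM {A : Type} (f : A → List A) : ℕ → A → List A
  | 0 => fun α => [α]
  | k+1 => fun α => (iterM f k α).flatMap f

/-- A morphism is in class P if there is a palindrome `p` and, for each letter `α`,
a palindrome `q_α` with `φ(α) = p q_α`. -/
def ClassP {A : Type} (f : A → List A) : Prop :=
  ∃ p : List A, p.reverse = p ∧ ∀ α, ∃ q : List A, q.reverse = q ∧ f α = p ++ q

/-- Morphisms `f` and `g` are conjugate if `f(x)w = wg(x)` for all `x` and some fixed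
word `w`, or symmetrically. -/
def ConjugateMorph {A : Type} (f g : A → List A) : Prop :=
  ∃ w : List A, (∀ α, f α ++ w = w ++ g α) ∨ (∀ α, g α ++ w = w ++ f α)

/-- iterM applied on the other side. -/
lemma iterM_succ' {A : Type} (f : A → List A) (k : ℕ) (α : A) :
    iterM f (k+1) α = (f α).flatMap (iterM f k) := by
  induction k generalizing α with
  | zero => simp [iterM]
  | succ k ih =>
      show (iterM f (k+1) α).flatMap f = _
      rw [ih]
      rw [List.flatMap_assoc]
      rfl

lemma itA (k : ℕ) :
    iterM gam (k+1) .a = iterM gam k .a ++ (iterM gam k .c ++ iterM gam k .a) := by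
  rw [iterM_succ']; simp [gam]

lemma itB (k : ℕ) :
    iterM gam (k+1) .b = iterM gam k .c ++ (iterM gam k .a ++ iterM gam k .b) := by
  rw [iterM_succ']; simp [gam]

lemma itC (k : ℕ) : iterM gam (k+1) .c = iterM gam k .b := by
  rw [iterM_succ']; simp [gam]

lemma headA : ∀ k, ∃ t, iterM gam k .a = .a :: t := by
  intro k
  induction k with
  | zero => exact ⟨[], rfl⟩
  | succ k ih =>
      obtain ⟨t, ht⟩ := ih
      exact ⟨_, by rw [itA, ht]; rfl⟩

lemma headBC : ∀ k, (∃ t, iterM gam k .b = (if k % 2 = 0 then ABC.b else ABC.c) :: t)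
    ∧ (∃ t, iterM gam k .c = (if k % 2 = 0 then ABC.c else ABC.b) :: t) := by
  intro k
  induction k with
  | zero => exact ⟨⟨[], rfl⟩, ⟨[], rfl⟩⟩
  | succ k ih =>
      obtain ⟨⟨t, ht⟩, ⟨s, hs⟩⟩ := ih
      rcases Nat.mod_two_eq_zero_or_one k with h | h
      · rw [h] at ht hs
        have h1 : (k+1) % 2 = 1 := by omega
        rw [h1]
        simp only [if_neg (by decide : ¬ (1 = 0)), if_pos rfl] at ht hs ⊢
        exact ⟨⟨_, by rw [itB, hs]; rfl⟩, ⟨_, by rw [itC]; exact ht⟩⟩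
      · rw [h] at ht hs
        have h1 : (k+1) % 2 = 0 := by omega
        rw [h1]
        simp only [if_neg (by decide : ¬ (1 = 0)), if_pos rfl] at ht hs ⊢
        exact ⟨⟨_, by rw [itB, hs]; rfl⟩, ⟨_, by rw [itC]; exact ht⟩⟩

lemma lastA : ∀ k, ∃ t, iterM gam k .a = t ++ [.a] := by
  intro k
  induction k with
  | zero => exact ⟨[], rfl⟩
  | succ k ih =>
      obtain ⟨t, ht⟩ := ih
      exact ⟨(t ++ [ABC.a]) ++ (iterM gam k .c ++ t), by rw [itA, ht]; simp⟩

lemma lastB : ∀ k, ∃ t, iterM gam k .b = t ++ [.b] := by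
  intro k
  induction k with
  | zero => exact ⟨[], rfl⟩
  | succ k ih =>
      obtain ⟨t, ht⟩ := ih
      exact ⟨iterM gam k .c ++ (iterM gam k .a ++ t), by rw [itB, ht]; simp⟩

/-- a palindrome's first letter equals its last letter -/
lemma pal_head_last {l : List ABC} {x y : ABC} {s t : List ABC}
    (hpal : l.reverse = l) (h1 : l = x :: t) (h2 : l = s ++ [y]) : x = y := by
  have h3 : l.reverse = y :: s.reverse := by rw [h2]; simp
  rw [hpal, h1] at h3
  simp only [List.cons.injEq] at h3
  exact h3.1

/-- For every k ≥ 1, no conjugate of γ^k is in class P. -/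
theorem gamma_pow_no_conjugate_classP : ∀ k : ℕ, 1 ≤ k →
    ¬ ∃ g : ABC → List ABC, ConjugateMorph (iterM gam k) g ∧ ClassP g := by
  intro k hk ⟨g, ⟨w, hconj⟩, p, hppal, hq⟩
  obtain ⟨m, rfl⟩ : ∃ m, k = m + 1 := ⟨k - 1, by omega⟩
  obtain ⟨ta, hta⟩ := headA (m+1)
  obtain ⟨⟨tb, htb⟩, -⟩ := headBC (m+1)
  obtain ⟨sa, hsa⟩ := lastA (m+1)
  obtain ⟨sb, hsb⟩ := lastB (m+1)
  -- the head of f b is not a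
  have hbne : (if (m+1) % 2 = 0 then ABC.b else ABC.c) ≠ ABC.a := by
    rcases Nat.mod_two_eq_zero_or_one (m+1) with h | h <;> simp [h]
  -- first: w must be empty, so g = f
  have hgf : ∀ α, g α = iterM gam (m+1) α := by
    rcases hconj with hc | hc
    · cases w with
      | nil => intro α; have := hc α; simpa using this.symm
      | cons u w' =>
          exfalso
          have h1 := hc .a
          rw [hta] at h1
          have h2 := hc .b
          rw [htb] at h2
          simp only [List.cons_append, List.cons.injEq] at h1 h2
          exact hbne (h2.1.trans h1.1.symm)
    · cases w with
      | nil => intro α; have := hc α; simpa using this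
      | cons u w' =>
          exfalso
          have h1 := congrArg List.reverse (hc .a)
          have h2 := congrArg List.reverse (hc .b)
          rw [hsa] at h1
          rw [hsb] at h2
          simp only [List.reverse_append, List.reverse_cons, List.reverse_singleton] at h1 h2
          -- h1 : w'.reverse ++ [u] ++ (g a).reverse = ([a] ++ sa.reverse) ++ (w'.reverse ++ [u])  roughly
          -- extract head equality: the reverse of (u::w') is nonempty
          cases hw : (u :: w').reverse with
          | nil => simp at hw
          | cons v r =>
              have h1' := congrArg List.reverse (hc .a)
              have h2' := congrArg List.reverse (hc .b)
              rw [List.reverse_append, List.reverse_append, hw, hsa] at h1'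
              rw [List.reverse_append, List.reverse_append, hw, hsb] at h2'
              simp only [List.reverse_append, List.reverse_singleton, List.cons_append,
                List.singleton_append, List.cons.injEq] at h1' h2'
              exact absurd (h1'.1.symm.trans h2'.1) (by simp)
  -- now f itself is in class P : derive contradiction
  cases p with
  | cons u p' =>
      obtain ⟨qa, -, hqa⟩ := hq .a
      obtain ⟨qb, -, hqb⟩ := hq .b
      rw [hgf] at hqa hqb
      rw [hta] at hqa
      rw [htb] at hqb
      simp only [List.cons_append, List.cons.injEq] at hqa hqb
      exact hbne (hqb.1.trans hqa.1.symm)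
  | nil =>
      -- every image is a palindrome; pick the odd-power b image
      rcases Nat.mod_two_eq_zero_or_one (m+1) with h | h
      · -- m+1 even, so m odd: use c, since f c = iterM gam m b
        have hm : m % 2 = 1 := by omega
        obtain ⟨⟨tb', htb'⟩, -⟩ := headBC m
        obtain ⟨sb', hsb'⟩ := lastB m
        rw [hm] at htb'
        obtain ⟨q, hqpal, hqe⟩ := hq .c
        rw [hgf] at hqe
        rw [show (m+1) = m + 1 from rfl, itC] at hqe
        simp only [List.nil_append] at hqe
        rw [hqe] at htb' hsb'
        have := pal_head_last hqpal htb' hsb'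
        simp at this
      · -- m+1 odd: use b
        rw [h] at htb
        obtain ⟨q, hqpal, hqe⟩ := hq .b
        rw [hgf] at hqe
        simp only [List.nil_append] at hqe
        rw [hqe] at htb hsb
        have := pal_head_last hqpal htb hsb
        simp at this
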